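/- (Key step of Theorem 2.) If W : ℝ^k → ℝ is convex on the compact convex set 𝒳 = {A b : b ∈ Δ(S)} and bounded on 𝒳, then the function χ ↦ (H̃W)(χ) is convex on 𝒳: for all χ₁, χ₂ ∈ 𝒳 and θ ∈ [0,1], (H̃W)(θχ₁ + (1−θ)χ₂) ≤ θ·(H̃W)(χ₁) + (1−θ)·(H̃W)(χ₂). -/

import Mathlib

/-!
Everything in the stage game depends on the belief `b` and player 2's policy `π₂` only through
the joint distribution `μ(s, a₂) = b(s) π₂(a₂ | s)`. For fixed `π₁` the immediate reward is linear
in `μ`, and the continuation term for `(a₁, o)` is `π₁(a₁)` times the perspective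
`n ↦ (∑ n) V(n / ∑ n)` of `V = W ∘ A`, evaluated at the unnormalised updated belief `n`, which is
linear in `μ`. Perspectives of convex functions are convex, so the stage value and its supremum
over `π₁` are convex in `μ`. A mixture of two joint distributions is the joint distribution of the
mixed belief with a suitable policy, so `H̃W` is an infimum over the fibres of `χ` of a function
that is convex along such mixtures, and infimal projections of this kind are convex. Boundedness
of `W` keeps every supremum and infimum finite.
-/

open Finset Matrix

section POSG

variable {S A1 A2 O : Type*} [Fintype S] [Fintype A1] [Fintype A2] [Fintype O]

/-- Expected immediate reward `E_{b,π₁,π₂}[R]`. -/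
def expReward (R : S → A1 → A2 → ℝ) (b : S → ℝ) (π1 : A1 → ℝ) (π2 : S → A2 → ℝ) : ℝ :=
  ∑ s, ∑ a1, ∑ a2, b s * π1 a1 * π2 s a2 * R s a1 a2

/-- `Pr_{b,π₁,π₂}[a₁,o]`, the probability that player 1 plays `a1` and observes `o`. -/
def prObs (T : O → S → S → A1 → A2 → ℝ) (b : S → ℝ) (π1 : A1 → ℝ) (π2 : S → A2 → ℝ)
    (a1 : A1) (o : O) : ℝ :=
  π1 a1 * ∑ s, ∑ a2, ∑ s', b s * π2 s a2 * T o s' s a1 a2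

/-- Bayesian belief update `τ(b,a₁,π₂,o)`. -/
noncomputable def beliefUpd (T : O → S → S → A1 → A2 → ℝ) (b : S → ℝ) (π2 : S → A2 → ℝ)
    (a1 : A1) (o : O) : S → ℝ := fun s' =>
  (∑ s, ∑ a2, b s * π2 s a2 * T o s' s a1 a2) /
    (∑ s'', ∑ s, ∑ a2, b s * π2 s a2 * T o s'' s a1 a2)

/-- Value of the stage game under stage strategies `π₁, π₂` with continuation values `V`. -/
noncomputable def stageVal (T : O → S → S → A1 → A2 → ℝ) (R : S → A1 → A2 → ℝ) (γ : ℝ)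
    (V : (S → ℝ) → ℝ) (b : S → ℝ) (π1 : A1 → ℝ) (π2 : S → A2 → ℝ) : ℝ :=
  expReward R b π1 π2 + γ * ∑ a1, ∑ o,
    if 0 < prObs T b π1 π2 a1 o then
      prObs T b π1 π2 a1 o * V (beliefUpd T b π2 a1 o)
    else 0

/-- The exact Bellman (stage-game) operator `H` over beliefs. -/
noncomputable def Hop (T : O → S → S → A1 → A2 → ℝ) (R : S → A1 → A2 → ℝ) (γ : ℝ)
    (V : (S → ℝ) → ℝ) (b : S → ℝ) : ℝ :=
  ⨅ π2 : {π2 : S → A2 → ℝ // ∀ s, π2 s ∈ stdSimplex ℝ A2},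
    ⨆ π1 : {π1 : A1 → ℝ // π1 ∈ stdSimplex ℝ A1},
      stageVal T R γ V b π1.1 π2.1

/-- The abstract stage-game operator `H̃` over characteristic vectors. -/
noncomputable def Habs {k : ℕ} (T : O → S → S → A1 → A2 → ℝ) (R : S → A1 → A2 → ℝ) (γ : ℝ)
    (A : Matrix (Fin k) S ℝ) (W : (Fin k → ℝ) → ℝ) (χ : Fin k → ℝ) : ℝ :=
  ⨅ b : {b : S → ℝ // b ∈ stdSimplex ℝ S ∧ A.mulVec b = χ},
    ⨅ π2 : {π2 : S → A2 → ℝ // ∀ s, π2 s ∈ stdSimplex ℝ A2},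
      ⨆ π1 : {π1 : A1 → ℝ // π1 ∈ stdSimplex ℝ A1},
        stageVal T R γ (fun b' => W (A.mulVec b')) b.1 π1.1 π2.1

end POSG

theorem ConvexOn.finset_sum {ι E : Type*} [AddCommMonoid E] [Module ℝ E] {s : Set E}
    {t : Finset ι} {f : ι → E → ℝ} (hs : Convex ℝ s) (hf : ∀ i ∈ t, ConvexOn ℝ s (f i)) :
    ConvexOn ℝ s fun x => ∑ i ∈ t, f i x := by
  classical
  induction t using Finset.induction_on with
  | empty => simpa using convexOn_const 0 hs
  | insert i t hi ih =>
    simp only [Finset.sum_insert hi]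
    exact (hf i (mem_insert_self i t)).add (ih fun j hj => hf j (mem_insert_of_mem hj))

theorem convexOn_of_isGLB_image {ι E : Type*} [AddCommMonoid E] [Module ℝ E] {D : Set E}
    {h : E → ℝ} {F : ι → ℝ} {fiber : E → Set ι} (hD : Convex ℝ D)
    (hglb : ∀ x ∈ D, IsGLB (F '' fiber x) (h x))
    (hmix : ∀ x ∈ D, ∀ y ∈ D, ∀ i ∈ fiber x, ∀ j ∈ fiber y, ∀ ⦃a b : ℝ⦄, 0 ≤ a → 0 ≤ b →
      a + b = 1 → ∃ k ∈ fiber (a • x + b • y), F k ≤ a * F i + b * F j) :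
    ConvexOn ℝ D h := by
  refine ⟨hD, fun x hx y hy a b ha hb hab => le_of_forall_pos_le_add fun ε hε => ?_⟩
  obtain ⟨_, ⟨i, hi, rfl⟩, -, hFi⟩ := (hglb x hx).exists_between (lt_add_of_pos_right (h x) hε)
  obtain ⟨_, ⟨j, hj, rfl⟩, -, hFj⟩ := (hglb y hy).exists_between (lt_add_of_pos_right (h y) hε)
  obtain ⟨k, hk, hFk⟩ := hmix x hx y hy i hi j hj ha hb hab
  calc h (a • x + b • y) ≤ F k := (hglb _ (hD hx hy ha hb hab)).1 ⟨k, hk, rfl⟩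
    _ ≤ a * F i + b * F j := hFk
    _ ≤ a * (h x + ε) + b * (h y + ε) := by gcongr
    _ = a • h x + b • h y + ε := by simp only [smul_eq_mul]; linear_combination ε * hab

theorem isGLB_ciInf_ciInf {α β : Type*} {p : α → Prop} {q : β → Prop} {f : α → β → ℝ} {m : ℝ}
    (hp : ∃ x, p x) (hq : ∃ y, q y) (hm : ∀ x, p x → ∀ y, q y → m ≤ f x y) :
    IsGLB ((fun z : α × β => f z.1 z.2) '' {z | p z.1 ∧ q z.2})
      (⨅ x : {x // p x}, ⨅ y : {y // q y}, f x y) := by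
  obtain ⟨x₀, hx₀⟩ := hp
  obtain ⟨y₀, hy₀⟩ := hq
  have : Nonempty {x // p x} := ⟨⟨x₀, hx₀⟩⟩
  have : Nonempty {y // q y} := ⟨⟨y₀, hy₀⟩⟩
  have hinner (x : {x // p x}) : BddBelow (Set.range fun y : {y // q y} => f x y) :=
    ⟨m, by rintro _ ⟨y, rfl⟩; exact hm x x.2 y y.2⟩
  have houter : BddBelow (Set.range fun x : {x // p x} => ⨅ y : {y // q y}, f x y) :=
    ⟨m, by rintro _ ⟨x, rfl⟩; exact le_ciInf fun y => hm x x.2 y y.2⟩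
  refine ⟨?_, fun c hc => le_ciInf fun x => le_ciInf fun y => hc ⟨(x, y), ⟨x.2, y.2⟩, rfl⟩⟩
  rintro _ ⟨⟨x, y⟩, ⟨hx, hy⟩, rfl⟩
  exact (ciInf_le houter ⟨x, hx⟩).trans (ciInf_le (hinner _) ⟨y, hy⟩)

theorem abs_sum_mul_le {ι : Type*} (s : Finset ι) {w g : ι → ℝ} {c : ℝ}
    (hw : ∀ i ∈ s, 0 ≤ w i) (hg : ∀ i ∈ s, |g i| ≤ c) :
    |∑ i ∈ s, w i * g i| ≤ (∑ i ∈ s, w i) * c := by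
  rw [sum_mul]
  refine (abs_sum_le_sum_abs _ _).trans (sum_le_sum fun i hi => ?_)
  rw [abs_mul, abs_of_nonneg (hw i hi)]
  exact mul_le_mul_of_nonneg_left (hg i hi) (hw i hi)

section Perspective

variable {ι : Type*} [Fintype ι]

theorem inv_sum_smul_mem_stdSimplex {n : ι → ℝ} (hn : 0 ≤ n) (hsum : 0 < ∑ i, n i) :
    (∑ i, n i)⁻¹ • n ∈ stdSimplex ℝ ι :=
  ⟨fun i => smul_nonneg (inv_nonneg.2 hsum.le) (hn i), by
    simp only [Pi.smul_apply, smul_eq_mul, ← Finset.mul_sum, inv_mul_cancel₀ hsum.ne']⟩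

-- The guard `0 < ∑ n` plays the role of the guard `0 < prObs …` in `stageVal`.
noncomputable def perspective (V : (ι → ℝ) → ℝ) (n : ι → ℝ) : ℝ :=
  if 0 < ∑ i, n i then (∑ i, n i) * V ((∑ i, n i)⁻¹ • n) else 0

variable {V : (ι → ℝ) → ℝ}

theorem perspective_smul {c : ℝ} (hc : 0 ≤ c) (n : ι → ℝ) :
    perspective V (c • n) = c * perspective V n := by
  rcases hc.eq_or_lt with rfl | hc
  · simp [perspective]
  have hsum : ∑ i, (c • n) i = c * ∑ i, n i := by simp [Finset.mul_sum]
  simp only [perspective, hsum, mul_pos_iff_of_pos_left hc, smul_smul, mul_inv,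
    mul_right_comm _ _ c, inv_mul_cancel₀ hc.ne', one_mul]
  split_ifs <;> ring

theorem mul_perspective {c : ℝ} (hc : 0 ≤ c) (n : ι → ℝ) :
    c * perspective V n =
      if 0 < c * ∑ i, n i then c * (∑ i, n i) * V ((∑ i, n i)⁻¹ • n) else 0 := by
  rcases hc.eq_or_lt with rfl | hc
  · simp
  simp only [perspective, mul_pos_iff_of_pos_left hc]
  split_ifs <;> ring

theorem perspective_add_le (hV : ConvexOn ℝ (stdSimplex ℝ ι) V) {n m : ι → ℝ} (hn : 0 ≤ n)
    (hm : 0 ≤ m) : perspective V (n + m) ≤ perspective V n + perspective V m := by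
  rcases (Fintype.sum_nonneg hn).eq_or_lt with hσ | hσ
  · simp [(Fintype.sum_eq_zero_iff_of_nonneg hn).1 hσ.symm, perspective]
  rcases (Fintype.sum_nonneg hm).eq_or_lt with hτ | hτ
  · simp [(Fintype.sum_eq_zero_iff_of_nonneg hm).1 hτ.symm, perspective]
  have hconv := hV.2 (inv_sum_smul_mem_stdSimplex hn hσ) (inv_sum_smul_mem_stdSimplex hm hτ)
    (div_nonneg hσ.le (add_pos hσ hτ).le) (div_nonneg hτ.le (add_pos hσ hτ).le)
    (by field_simp)
  have hsum : ∑ i, (n + m) i = ∑ i, n i + ∑ i, m i := sum_add_distrib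
  simp only [perspective, hsum, if_pos (add_pos hσ hτ), if_pos hσ, if_pos hτ]
  set σ := ∑ i, n i
  set τ := ∑ i, m i
  have hmix : (σ + τ)⁻¹ • (n + m) =
      (σ / (σ + τ)) • (σ⁻¹ • n) + (τ / (σ + τ)) • (τ⁻¹ • m) := by
    rw [smul_smul, smul_smul, smul_add]
    congr 2 <;> field_simp
  calc (σ + τ) * V ((σ + τ)⁻¹ • (n + m))
      ≤ (σ + τ) * ((σ / (σ + τ)) • V (σ⁻¹ • n) + (τ / (σ + τ)) • V (τ⁻¹ • m)) := by
        rw [hmix]; gcongr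
    _ = σ * V (σ⁻¹ • n) + τ * V (τ⁻¹ • m) := by simp only [smul_eq_mul]; field_simp

theorem convexOn_perspective (hV : ConvexOn ℝ (stdSimplex ℝ ι) V) :
    ConvexOn ℝ (Set.Ici 0) (perspective V) :=
  ⟨convex_Ici 0, fun n hn m hm a b ha hb _ =>
    (perspective_add_le hV (smul_nonneg ha hn) (smul_nonneg hb hm)).trans_eq <| by
      rw [perspective_smul ha, perspective_smul hb, smul_eq_mul, smul_eq_mul]⟩

theorem abs_perspective_le {C : ℝ} (hV : ∀ x ∈ stdSimplex ℝ ι, |V x| ≤ C) {n : ι → ℝ}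
    (hn : 0 ≤ n) : |perspective V n| ≤ C * ∑ i, n i := by
  unfold perspective
  split_ifs with hσ
  · rw [abs_mul, abs_of_pos hσ, mul_comm]
    exact mul_le_mul_of_nonneg_right (hV _ (inv_sum_smul_mem_stdSimplex hn hσ)) hσ.le
  · simp [le_antisymm (not_lt.1 hσ) (sum_nonneg fun i _ => hn i)]

end Perspective

section StageGame

variable {S A1 A2 O : Type*} [Fintype A2]

def jointDist (b : S → ℝ) (π2 : S → A2 → ℝ) : S → A2 → ℝ := fun s a2 => b s * π2 s a2

theorem sum_jointDist {b : S → ℝ} {π2 : S → A2 → ℝ} {s : S} (hπ2 : π2 s ∈ stdSimplex ℝ A2) :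
    ∑ a2, jointDist b π2 s a2 = b s := by
  simp only [jointDist, ← mul_sum, hπ2.2, mul_one]

theorem exists_policy_jointDist_eq [Nonempty A2] {μ : S → A2 → ℝ} (hμ : 0 ≤ μ) :
    ∃ π2 : S → A2 → ℝ, (∀ s, π2 s ∈ stdSimplex ℝ A2) ∧
      jointDist (fun s => ∑ a2, μ s a2) π2 = μ := by
  classical
  refine ⟨fun s => if 0 < ∑ a2, μ s a2 then (∑ a2, μ s a2)⁻¹ • μ s
    else Pi.single (Classical.arbitrary A2) 1, fun s => ?_, ?_⟩
  · dsimp only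
    split_ifs with h
    · exact inv_sum_smul_mem_stdSimplex (hμ s) h
    · exact single_mem_stdSimplex ℝ _
  · ext s a2
    simp only [jointDist]
    split_ifs with h
    · simp [h.ne']
    · have h0 : μ s = 0 := (Fintype.sum_eq_zero_iff_of_nonneg (hμ s)).1
        (le_antisymm (not_lt.1 h) (Fintype.sum_nonneg (hμ s)))
      simp [h0]

variable [Fintype S]

theorem jointDist_nonneg {b : S → ℝ} {π2 : S → A2 → ℝ} (hb : b ∈ stdSimplex ℝ S)
    (hπ2 : ∀ s, π2 s ∈ stdSimplex ℝ A2) : 0 ≤ jointDist b π2 :=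
  fun s a2 => mul_nonneg (hb.1 s) ((hπ2 s).1 a2)

-- `beliefUpd` is this vector normalised by its total mass, which is `prObs … / π1 a1`.
def beliefUpdNum (T : O → S → S → A1 → A2 → ℝ) (a1 : A1) (o : O) :
    (S → A2 → ℝ) →ₗ[ℝ] S → ℝ where
  toFun μ s' := ∑ s, ∑ a2, μ s a2 * T o s' s a1 a2
  map_add' μ ν := by ext; simp [add_mul, sum_add_distrib]
  map_smul' c μ := by ext; simp [mul_sum, mul_assoc]

def jointReward (R : S → A1 → A2 → ℝ) (a1 : A1) : (S → A2 → ℝ) →ₗ[ℝ] ℝ where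
  toFun μ := ∑ s, ∑ a2, μ s a2 * R s a1 a2
  map_add' μ ν := by simp [add_mul, sum_add_distrib]
  map_smul' c μ := by simp [mul_sum, mul_assoc]

variable {T : O → S → S → A1 → A2 → ℝ} {R : S → A1 → A2 → ℝ} {γ : ℝ} {V : (S → ℝ) → ℝ}

theorem beliefUpdNum_nonneg (hT : ∀ o s' s a1 a2, 0 ≤ T o s' s a1 a2) {μ : S → A2 → ℝ}
    (hμ : 0 ≤ μ) (a1 : A1) (o : O) : 0 ≤ beliefUpdNum T a1 o μ :=
  fun s' => sum_nonneg fun s _ => sum_nonneg fun a2 _ => mul_nonneg (hμ s a2) (hT o s' s a1 a2)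

variable [Fintype O]

noncomputable def actionValue (T : O → S → S → A1 → A2 → ℝ) (R : S → A1 → A2 → ℝ) (γ : ℝ)
    (V : (S → ℝ) → ℝ) (μ : S → A2 → ℝ) (a1 : A1) : ℝ :=
  jointReward R a1 μ + γ * ∑ o, perspective V (beliefUpdNum T a1 o μ)

theorem sum_sum_beliefUpdNum (hTsum : ∀ s a1 a2, ∑ o, ∑ s', T o s' s a1 a2 = 1)
    (μ : S → A2 → ℝ) (a1 : A1) : ∑ o, ∑ s', beliefUpdNum T a1 o μ s' = ∑ s, ∑ a2, μ s a2 := by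
  calc ∑ o, ∑ s', beliefUpdNum T a1 o μ s'
      = ∑ s, ∑ a2, ∑ o, ∑ s', μ s a2 * T o s' s a1 a2 :=
        ((sum_congr rfl fun _ _ => sum_comm).trans sum_comm).trans
          (sum_congr rfl fun _ _ => (sum_congr rfl fun _ _ => sum_comm).trans sum_comm)
    _ = ∑ s, ∑ a2, μ s a2 := by simp only [← mul_sum, hTsum, mul_one]

theorem convexOn_actionValue (hT : ∀ o s' s a1 a2, 0 ≤ T o s' s a1 a2) (hγ : 0 ≤ γ)
    (hV : ConvexOn ℝ (stdSimplex ℝ S) V) (a1 : A1) :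
    ConvexOn ℝ (Set.Ici 0) fun μ => actionValue T R γ V μ a1 := by
  have hcont (o : O) : ConvexOn ℝ (Set.Ici 0) fun μ => perspective V (beliefUpdNum T a1 o μ) :=
    ((convexOn_perspective hV).comp_linearMap _).subset
      (fun _ hμ => beliefUpdNum_nonneg hT hμ a1 o) (convex_Ici 0)
  exact ((jointReward R a1).convexOn (convex_Ici 0)).add
    ((ConvexOn.finset_sum (convex_Ici 0) fun o _ => hcont o).smul hγ)

theorem abs_actionValue_le (hT : ∀ o s' s a1 a2, 0 ≤ T o s' s a1 a2)
    (hTsum : ∀ s a1 a2, ∑ o, ∑ s', T o s' s a1 a2 = 1) (hγ : 0 ≤ γ) {C0 C : ℝ}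
    (hR : ∀ s a1 a2, |R s a1 a2| ≤ C0) (hV : ∀ x ∈ stdSimplex ℝ S, |V x| ≤ C)
    {μ : S → A2 → ℝ} (hμ : 0 ≤ μ) (hμ1 : ∑ s, ∑ a2, μ s a2 = 1) (a1 : A1) :
    |actionValue T R γ V μ a1| ≤ C0 + γ * C := by
  have hreward : |jointReward R a1 μ| ≤ C0 := by
    have := abs_sum_mul_le univ (fun (p : S × A2) _ => hμ p.1 p.2) fun p _ => hR p.1 a1 p.2
    rwa [Fintype.sum_prod_type' fun s a2 => μ s a2 * R s a1 a2, Fintype.sum_prod_type', hμ1,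
      one_mul] at this
  have hcont : |∑ o, perspective V (beliefUpdNum T a1 o μ)| ≤ C :=
    calc |∑ o, perspective V (beliefUpdNum T a1 o μ)|
        ≤ ∑ o, C * ∑ s', beliefUpdNum T a1 o μ s' := (abs_sum_le_sum_abs _ _).trans
          (sum_le_sum fun o _ => abs_perspective_le hV (beliefUpdNum_nonneg hT hμ a1 o))
      _ = C := by rw [← mul_sum, sum_sum_beliefUpdNum hTsum, hμ1, mul_one]
  calc |actionValue T R γ V μ a1|
      ≤ |jointReward R a1 μ| + |γ * ∑ o, perspective V (beliefUpdNum T a1 o μ)| := abs_add_le _ _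
    _ ≤ C0 + γ * C := by rw [abs_mul, abs_of_nonneg hγ]; gcongr

variable [Fintype A1]

theorem stageVal_eq_sum_actionValue (b : S → ℝ) {π1 : A1 → ℝ} (hπ1 : 0 ≤ π1)
    (π2 : S → A2 → ℝ) :
    stageVal T R γ V b π1 π2 = ∑ a1, π1 a1 * actionValue T R γ V (jointDist b π2) a1 := by
  have hreward : expReward R b π1 π2 = ∑ a1, π1 a1 * jointReward R a1 (jointDist b π2) := by
    simp only [expReward, jointReward, jointDist, LinearMap.coe_mk, AddHom.coe_mk, mul_sum]
    rw [sum_comm]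
    exact sum_congr rfl fun a1 _ => sum_congr rfl fun s _ => sum_congr rfl fun a2 _ => by ring
  have hcont (a1 : A1) (o : O) :
      (if 0 < prObs T b π1 π2 a1 o then prObs T b π1 π2 a1 o * V (beliefUpd T b π2 a1 o)
        else 0) = π1 a1 * perspective V (beliefUpdNum T a1 o (jointDist b π2)) := by
    have hpr : prObs T b π1 π2 a1 o = π1 a1 * ∑ s', beliefUpdNum T a1 o (jointDist b π2) s' := by
      simp only [prObs, beliefUpdNum, jointDist, LinearMap.coe_mk, AddHom.coe_mk]
      exact congrArg _ ((sum_congr rfl fun s _ => sum_comm).trans sum_comm)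
    have hupd : beliefUpd T b π2 a1 o = (∑ s', beliefUpdNum T a1 o (jointDist b π2) s')⁻¹ •
        beliefUpdNum T a1 o (jointDist b π2) := by
      ext s'
      simp [beliefUpd, beliefUpdNum, jointDist, div_eq_inv_mul]
    rw [mul_perspective (hπ1 a1), hpr, hupd]
  simp only [stageVal, actionValue, hreward, hcont, mul_add, sum_add_distrib, mul_sum]
  congr 1
  exact sum_congr rfl fun a1 _ => sum_congr rfl fun o _ => by ring

theorem exists_policy_stageVal_le [Nonempty A2] (hT : ∀ o s' s a1 a2, 0 ≤ T o s' s a1 a2)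
    (hγ : 0 ≤ γ) (hV : ConvexOn ℝ (stdSimplex ℝ S) V) {b b' : S → ℝ} {π2 π2' : S → A2 → ℝ}
    (hb : b ∈ stdSimplex ℝ S) (hb' : b' ∈ stdSimplex ℝ S) (hπ2 : ∀ s, π2 s ∈ stdSimplex ℝ A2)
    (hπ2' : ∀ s, π2' s ∈ stdSimplex ℝ A2) {θ η : ℝ} (hθ : 0 ≤ θ) (hη : 0 ≤ η) (hθη : θ + η = 1) :
    ∃ ρ : S → A2 → ℝ, (∀ s, ρ s ∈ stdSimplex ℝ A2) ∧ ∀ π1 ∈ stdSimplex ℝ A1,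
      stageVal T R γ V (θ • b + η • b') π1 ρ ≤
        θ * stageVal T R γ V b π1 π2 + η * stageVal T R γ V b' π1 π2' := by
  obtain ⟨ρ, hρ, hjoint⟩ := exists_policy_jointDist_eq (add_nonneg
    (smul_nonneg hθ (jointDist_nonneg hb hπ2)) (smul_nonneg hη (jointDist_nonneg hb' hπ2')))
  have hmarg :
      (fun s => ∑ a2, (θ • jointDist b π2 + η • jointDist b' π2') s a2) = θ • b + η • b' := by
    ext s
    simp [sum_add_distrib, ← mul_sum, sum_jointDist (hπ2 s), sum_jointDist (hπ2' s)]
  rw [hmarg] at hjoint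
  refine ⟨ρ, hρ, fun π1 hπ1 => ?_⟩
  simp only [stageVal_eq_sum_actionValue _ hπ1.1, hjoint]
  exact (ConvexOn.finset_sum (convex_Ici 0) fun a1 _ =>
    (convexOn_actionValue hT hγ hV a1).smul (hπ1.1 a1)).2
    (jointDist_nonneg hb hπ2) (jointDist_nonneg hb' hπ2') hθ hη hθη

theorem abs_stageVal_le (hT : ∀ o s' s a1 a2, 0 ≤ T o s' s a1 a2)
    (hTsum : ∀ s a1 a2, ∑ o, ∑ s', T o s' s a1 a2 = 1) (hγ : 0 ≤ γ) {C0 C : ℝ}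
    (hR : ∀ s a1 a2, |R s a1 a2| ≤ C0) (hV : ∀ x ∈ stdSimplex ℝ S, |V x| ≤ C)
    {b : S → ℝ} {π1 : A1 → ℝ} {π2 : S → A2 → ℝ} (hb : b ∈ stdSimplex ℝ S)
    (hπ1 : π1 ∈ stdSimplex ℝ A1) (hπ2 : ∀ s, π2 s ∈ stdSimplex ℝ A2) :
    |stageVal T R γ V b π1 π2| ≤ C0 + γ * C := by
  have hμ1 : ∑ s, ∑ a2, jointDist b π2 s a2 = 1 := by simp only [sum_jointDist (hπ2 _), hb.2]
  have := abs_sum_mul_le univ (fun a1 _ => hπ1.1 a1) fun a1 _ =>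
    abs_actionValue_le hT hTsum hγ hR hV (jointDist_nonneg hb hπ2) hμ1 a1
  rwa [hπ1.2, one_mul, ← stageVal_eq_sum_actionValue b hπ1.1] at this

end StageGame

section BestResponse

variable {S A1 A2 O : Type*} [Fintype S] [Fintype A1] [Fintype A2] [Fintype O]
  {T : O → S → S → A1 → A2 → ℝ} {R : S → A1 → A2 → ℝ} {γ : ℝ} {V : (S → ℝ) → ℝ}

noncomputable def bestResponseValue (T : O → S → S → A1 → A2 → ℝ) (R : S → A1 → A2 → ℝ)
    (γ : ℝ) (V : (S → ℝ) → ℝ) (b : S → ℝ) (π2 : S → A2 → ℝ) : ℝ :=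
  ⨆ π1 : {π1 : A1 → ℝ // π1 ∈ stdSimplex ℝ A1}, stageVal T R γ V b π1.1 π2

variable [Nonempty A1] {M : ℝ}

theorem isLUB_bestResponseValue
    (hM : ∀ b ∈ stdSimplex ℝ S, ∀ π1 ∈ stdSimplex ℝ A1, ∀ π2 : S → A2 → ℝ,
      (∀ s, π2 s ∈ stdSimplex ℝ A2) → |stageVal T R γ V b π1 π2| ≤ M)
    {b : S → ℝ} {π2 : S → A2 → ℝ} (hb : b ∈ stdSimplex ℝ S) (hπ2 : ∀ s, π2 s ∈ stdSimplex ℝ A2) :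
    IsLUB (Set.range fun π1 : {π1 : A1 → ℝ // π1 ∈ stdSimplex ℝ A1} =>
      stageVal T R γ V b π1.1 π2) (bestResponseValue T R γ V b π2) := by
  classical
  have : Nonempty {π1 : A1 → ℝ // π1 ∈ stdSimplex ℝ A1} :=
    ⟨⟨_, single_mem_stdSimplex ℝ (Classical.arbitrary A1)⟩⟩
  exact isLUB_ciSup ⟨M, by rintro _ ⟨π1, rfl⟩; exact (abs_le.1 (hM b hb π1.1 π1.2 π2 hπ2)).2⟩

theorem neg_le_bestResponseValue
    (hM : ∀ b ∈ stdSimplex ℝ S, ∀ π1 ∈ stdSimplex ℝ A1, ∀ π2 : S → A2 → ℝ,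
      (∀ s, π2 s ∈ stdSimplex ℝ A2) → |stageVal T R γ V b π1 π2| ≤ M)
    {b : S → ℝ} {π2 : S → A2 → ℝ} (hb : b ∈ stdSimplex ℝ S) (hπ2 : ∀ s, π2 s ∈ stdSimplex ℝ A2) :
    -M ≤ bestResponseValue T R γ V b π2 := by
  classical
  have hπ1 := single_mem_stdSimplex ℝ (Classical.arbitrary A1)
  exact (abs_le.1 (hM b hb _ hπ1 π2 hπ2)).1.trans
    ((isLUB_bestResponseValue hM hb hπ2).1 ⟨⟨_, hπ1⟩, rfl⟩)

theorem exists_policy_bestResponseValue_le [Nonempty A2]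
    (hT : ∀ o s' s a1 a2, 0 ≤ T o s' s a1 a2) (hγ : 0 ≤ γ) (hV : ConvexOn ℝ (stdSimplex ℝ S) V)
    (hM : ∀ b ∈ stdSimplex ℝ S, ∀ π1 ∈ stdSimplex ℝ A1, ∀ π2 : S → A2 → ℝ,
      (∀ s, π2 s ∈ stdSimplex ℝ A2) → |stageVal T R γ V b π1 π2| ≤ M)
    {b b' : S → ℝ} {π2 π2' : S → A2 → ℝ} (hb : b ∈ stdSimplex ℝ S) (hb' : b' ∈ stdSimplex ℝ S)
    (hπ2 : ∀ s, π2 s ∈ stdSimplex ℝ A2) (hπ2' : ∀ s, π2' s ∈ stdSimplex ℝ A2)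
    {θ η : ℝ} (hθ : 0 ≤ θ) (hη : 0 ≤ η) (hθη : θ + η = 1) :
    ∃ ρ : S → A2 → ℝ, (∀ s, ρ s ∈ stdSimplex ℝ A2) ∧
      bestResponseValue T R γ V (θ • b + η • b') ρ ≤
        θ * bestResponseValue T R γ V b π2 + η * bestResponseValue T R γ V b' π2' := by
  obtain ⟨ρ, hρ, hle⟩ := exists_policy_stageVal_le hT hγ hV hb hb' hπ2 hπ2' hθ hη hθη
  refine ⟨ρ, hρ, (isLUB_bestResponseValue hM (convex_stdSimplex ℝ S hb hb' hθ hη hθη) hρ).2 ?_⟩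
  rintro _ ⟨π1, rfl⟩
  refine (hle π1.1 π1.2).trans ?_
  gcongr
  exacts [(isLUB_bestResponseValue hM hb hπ2).1 ⟨π1, rfl⟩,
    (isLUB_bestResponseValue hM hb' hπ2').1 ⟨π1, rfl⟩]

theorem convexOn_Habs [Nonempty A2] {k : ℕ} {A : Matrix (Fin k) S ℝ} {W : (Fin k → ℝ) → ℝ}
    (hT : ∀ o s' s a1 a2, 0 ≤ T o s' s a1 a2) (hγ : 0 ≤ γ)
    (hWconv : ConvexOn ℝ (A.mulVec '' stdSimplex ℝ S) W)
    (hM : ∀ b ∈ stdSimplex ℝ S, ∀ π1 ∈ stdSimplex ℝ A1, ∀ π2 : S → A2 → ℝ,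
      (∀ s, π2 s ∈ stdSimplex ℝ A2) → |stageVal T R γ (fun b' => W (A.mulVec b')) b π1 π2| ≤ M) :
    ConvexOn ℝ (A.mulVec '' stdSimplex ℝ S) (Habs T R γ A W) := by
  classical
  have hV : ConvexOn ℝ (stdSimplex ℝ S) fun b => W (A.mulVec b) :=
    (hWconv.comp_linearMap A.mulVecLin).subset (fun b hb => ⟨b, hb, rfl⟩) (convex_stdSimplex ℝ S)
  refine convexOn_of_isGLB_image ((convex_stdSimplex ℝ S).linear_image A.mulVecLin)
    (F := fun z : (S → ℝ) × (S → A2 → ℝ) =>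
      bestResponseValue T R γ (fun b' => W (A.mulVec b')) z.1 z.2)
    (fiber := fun χ => {z | (z.1 ∈ stdSimplex ℝ S ∧ A.mulVec z.1 = χ) ∧
      ∀ s, z.2 s ∈ stdSimplex ℝ A2}) ?_ ?_
  · rintro _ ⟨b, hb, rfl⟩
    exact isGLB_ciInf_ciInf (p := fun b' => b' ∈ stdSimplex ℝ S ∧ A.mulVec b' = A.mulVec b)
      (q := fun π2 : S → A2 → ℝ => ∀ s, π2 s ∈ stdSimplex ℝ A2)
      (f := bestResponseValue T R γ fun b' => W (A.mulVec b')) ⟨b, hb, rfl⟩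
      ⟨_, fun _ => single_mem_stdSimplex ℝ (Classical.arbitrary A2)⟩
      fun b hb π2 hπ2 => neg_le_bestResponseValue hM hb.1 hπ2
  · rintro _ - _ - ⟨b, π2⟩ ⟨⟨hb, rfl⟩, hπ2⟩ ⟨b', π2'⟩ ⟨⟨hb', rfl⟩, hπ2'⟩ θ η hθ hη hθη
    obtain ⟨ρ, hρ, hle⟩ :=
      exists_policy_bestResponseValue_le hT hγ hV hM hb hb' hπ2 hπ2' hθ hη hθη
    exact ⟨(θ • b + η • b', ρ), ⟨⟨convex_stdSimplex ℝ S hb hb' hθ hη hθη, by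
      simp [mulVec_add, mulVec_smul]⟩, hρ⟩, hle⟩

end BestResponse

theorem habs_convexOn_general
    {S A1 A2 O : Type*} [Fintype S] [Fintype A1] [Fintype A2] [Fintype O]
    [Nonempty A1] [Nonempty A2] {k : ℕ}
    (T : O → S → S → A1 → A2 → ℝ) (R : S → A1 → A2 → ℝ) (γ : ℝ)
    (hT : ∀ o s' s a1 a2, 0 ≤ T o s' s a1 a2)
    (hTsum : ∀ s a1 a2, ∑ o, ∑ s', T o s' s a1 a2 = 1)
    (hγ0 : 0 ≤ γ)
    (A : Matrix (Fin k) S ℝ)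
    (W : (Fin k → ℝ) → ℝ)
    (hWconv : ConvexOn ℝ (A.mulVec '' stdSimplex ℝ S) W)
    (hWbdd : ∃ C, ∀ χ ∈ A.mulVec '' stdSimplex ℝ S, |W χ| ≤ C) :
    ∀ χ1 ∈ A.mulVec '' stdSimplex ℝ S, ∀ χ2 ∈ A.mulVec '' stdSimplex ℝ S,
      ∀ θ : ℝ, 0 ≤ θ → θ ≤ 1 →
        Habs T R γ A W (θ • χ1 + (1 - θ) • χ2) ≤
          θ * Habs T R γ A W χ1 + (1 - θ) * Habs T R γ A W χ2 := by
  obtain ⟨C, hC⟩ := hWbdd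
  obtain ⟨C0, hR⟩ := (Set.finite_range fun p : S × A1 × A2 => |R p.1 p.2.1 p.2.2|).bddAbove
  have hconv := convexOn_Habs hT hγ0 hWconv fun b hb π1 hπ1 π2 hπ2 =>
    abs_stageVal_le hT hTsum hγ0 (fun s a1 a2 => hR ⟨(s, a1, a2), rfl⟩)
      (fun b hb => hC _ ⟨b, hb, rfl⟩) hb hπ1 hπ2
  intro χ1 hχ1 χ2 hχ2 θ hθ0 hθ1
  simpa only [smul_eq_mul] using hconv.2 hχ1 hχ2 hθ0 (sub_nonneg.2 hθ1) (add_sub_cancel θ 1)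

/-- key step of Theorem 2: if `W` is convex and bounded on
`𝒳 = {A b : b ∈ Δ(S)}`, then `H̃ W` is convex on `𝒳`. -/
theorem habs_convexOn
    {S A1 A2 O : Type*} [Fintype S] [Fintype A1] [Fintype A2] [Fintype O]
    [Nonempty S] [Nonempty A1] [Nonempty A2] [Nonempty O] {k : ℕ}
    (T : O → S → S → A1 → A2 → ℝ) (R : S → A1 → A2 → ℝ) (γ : ℝ)
    (hT : ∀ o s' s a1 a2, 0 ≤ T o s' s a1 a2)
    (hTsum : ∀ s a1 a2, ∑ o, ∑ s', T o s' s a1 a2 = 1)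
    (hγ0 : 0 ≤ γ) (hγ1 : γ < 1)
    (A : Matrix (Fin k) S ℝ)
    (W : (Fin k → ℝ) → ℝ)
    (hWconv : ConvexOn ℝ (A.mulVec '' stdSimplex ℝ S) W)
    (hWbdd : ∃ C, ∀ χ ∈ A.mulVec '' stdSimplex ℝ S, |W χ| ≤ C) :
    ∀ χ1 ∈ A.mulVec '' stdSimplex ℝ S, ∀ χ2 ∈ A.mulVec '' stdSimplex ℝ S,
      ∀ θ : ℝ, 0 ≤ θ → θ ≤ 1 →
        Habs T R γ A W (θ • χ1 + (1 - θ) • χ2) ≤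
          θ * Habs T R γ A W χ1 + (1 - θ) * Habs T R γ A W χ2 :=
  habs_convexOn_general T R γ hT hTsum hγ0 A W hWconv hWbdd
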